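/- Let n, m ≥ 1, v₀, …, v_{n−1} ∈ ℝ^d and w₀, …, w_{m−1} ∈ ℝ^d, and let u = (v₀, …, v_{n−1}, w₀, …, w_{m−1}) be the concatenated tuple of length n + m. Then the convex join { λ p₁ + (1−λ) p₂ : p₁ ∈ C(v), p₂ ∈ C(w), λ ∈ [0,1] } of the chain-form sets C(v) and C(w) equals the chain-form set C(u) of the concatenation, which uses n + m − 1 = (n−1) + (m−1) + 1 basis vectors. -/

import Mathlib

/-- The chain-form set of a tuple of points `x₀, …, x_N ∈ ℝ^d`:
`{ x_N + Σ_{i=0}^{N-1} (∏_{k=i}^{N-1} α_k)(x_i − x_{i+1}) : α ∈ [0,1]^N }`. -/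
def chainForm {d N : ℕ} (x : Fin (N + 1) → (Fin d → ℝ)) : Set (Fin d → ℝ) :=
  {y : Fin d → ℝ | ∃ α : Fin N → ℝ, (∀ k, α k ∈ Set.Icc (0 : ℝ) 1) ∧
    y = x (Fin.last N) +
      ∑ i : Fin N, (∏ k ∈ Finset.Ici i, α k) • (x i.castSucc - x i.succ)}

/-! A chain form is the convex hull of its points. Splitting off the last parameter `α_{N-1}`
writes a chain point as `α_{N-1} • y + (1 - α_{N-1}) • x_{N-1}` with `y` a chain point of
`x₀, …, x_{N-2}`, so `C(x₀, …, x_{N-1})` is the convex join of `{x_{N-1}}` with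
`C(x₀, …, x_{N-2})`, and induction gives `C(x) = conv {x_i}`. The theorem is then
`conv (A ∪ B) = join (conv A) (conv B)`. -/

open Finset

theorem Fin.prod_Ici_castSucc {M : Type*} [CommMonoid M] {N : ℕ} (f : Fin (N + 1) → M)
    (i : Fin N) :
    ∏ k ∈ Ici i.castSucc, f k = (∏ k ∈ Ici i, f k.castSucc) * f (Fin.last N) := by
  have hIci : Ici i.castSucc = insert (Fin.last N) ((Ici i).map Fin.castSuccEmb) := by
    rw [Fin.map_castSuccEmb_Ici, Ico_insert_right i.castSucc_lt_last.le]
    rfl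
  rw [hIci, prod_insert (by simp), prod_map, mul_comm]
  rfl

theorem Fin.range_append {α : Type*} {n m : ℕ} (v : Fin n → α) (w : Fin m → α) :
    Set.range (Fin.append v w) = Set.range v ∪ Set.range w := by
  ext y
  constructor
  · rintro ⟨i, rfl⟩
    induction i using Fin.addCases <;> simp
  · rintro (⟨i, rfl⟩ | ⟨i, rfl⟩)
    · exact ⟨Fin.castAdd m i, Fin.append_left v w i⟩
    · exact ⟨Fin.natAdd n i, Fin.append_right v w i⟩

theorem convexJoin_eq_setOf_smul_add_one_sub_smul {𝕜 E : Type*} [Ring 𝕜] [PartialOrder 𝕜]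
    [IsOrderedRing 𝕜] [AddCommGroup E] [Module 𝕜 E] (s t : Set E) :
    convexJoin 𝕜 s t =
      {x | ∃ p ∈ s, ∃ q ∈ t, ∃ l ∈ Set.Icc (0 : 𝕜) 1, x = l • p + (1 - l) • q} := by
  ext x
  simp only [mem_convexJoin, Set.mem_ofPred_eq]
  refine exists_congr fun p => and_congr_right fun _ => exists_congr fun q => ?_
  refine and_congr_right fun _ => ?_
  rw [segment_symm, segment_eq_image, Set.mem_image]
  exact exists_congr fun l => and_congr_right fun _ => by rw [add_comm, eq_comm]

section ChainPoint

variable {R E : Type*} [CommRing R] [AddCommGroup E] [Module R E]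

def chainPoint {N : ℕ} (x : Fin (N + 1) → E) (α : Fin N → R) : E :=
  x (Fin.last N) + ∑ i : Fin N, (∏ k ∈ Ici i, α k) • (x i.castSucc - x i.succ)

theorem chainPoint_succ {N : ℕ} (x : Fin (N + 2) → E) (α : Fin (N + 1) → R) :
    chainPoint x α = (1 - α (Fin.last N)) • x (Fin.last (N + 1)) +
      α (Fin.last N) • chainPoint (fun i => x i.castSucc) (fun i => α i.castSucc) := by
  simp only [chainPoint, Fin.sum_univ_castSucc, Fin.prod_Ici_castSucc, mul_comm _ (α _),
    ← smul_smul, ← smul_sum, show Ici (Fin.last N) = {Fin.last N} from Ici_top, prod_singleton,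
    Fin.succ_last, Fin.succ_castSucc]
  module

end ChainPoint

theorem mem_chainForm_iff {d N : ℕ} (x : Fin (N + 1) → (Fin d → ℝ)) (y : Fin d → ℝ) :
    y ∈ chainForm x ↔ ∃ α : Fin N → ℝ, (∀ k, α k ∈ Set.Icc (0 : ℝ) 1) ∧ y = chainPoint x α :=
  Iff.rfl

theorem chainForm_zero {d : ℕ} (x : Fin 1 → (Fin d → ℝ)) : chainForm x = {x 0} := by
  ext y
  simp [mem_chainForm_iff, chainPoint]

theorem chainForm_succ {d N : ℕ} (x : Fin (N + 2) → (Fin d → ℝ)) :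
    chainForm x = convexJoin ℝ {x (Fin.last (N + 1))} (chainForm (fun i => x i.castSucc)) := by
  ext y
  simp only [convexJoin_singleton_left, Set.mem_iUnion₂, mem_chainForm_iff]
  constructor
  · rintro ⟨α, hα, rfl⟩
    refine ⟨_, ⟨fun i => α i.castSucc, fun k => hα _, rfl⟩, ?_⟩
    rw [chainPoint_succ]
    exact ⟨1 - α (Fin.last N), α (Fin.last N), sub_nonneg.2 (hα _).2, (hα _).1, by ring, rfl⟩
  · rintro ⟨_, ⟨β, hβ, rfl⟩, a, b, ha, hb, hab, rfl⟩
    refine ⟨Fin.snoc β b, fun k => ?_, ?_⟩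
    · induction k using Fin.lastCases with
      | last => simpa using ⟨hb, hab ▸ le_add_of_nonneg_left ha⟩
      | cast i => simpa using hβ i
    · rw [chainPoint_succ, eq_sub_of_add_eq hab]
      simp

theorem chainForm_eq_convexHull {d N : ℕ} (x : Fin (N + 1) → (Fin d → ℝ)) :
    chainForm x = convexHull ℝ (Set.range x) := by
  induction N with
  | zero => simp [chainForm_zero, Fin.range_fin_succ]
  | succ N ih =>
    have hx : Set.range x = insert (x (Fin.last (N + 1))) (Set.range (Fin.init x)) := by
      conv_lhs => rw [← Fin.snoc_init_self x]
      exact Fin.range_snoc _ _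
    rw [chainForm_succ, ih, hx, convexHull_insert (Set.range_nonempty _)]
    rfl

/-- **Proposition 6.2 (convex hull in chain/C-representation).** The convex join
of the chain-form sets of `v₀, …, v_n` and `w₀, …, w_m` equals the chain-form
set of the concatenated tuple `(v₀, …, v_n, w₀, …, w_m)`, which uses
`(n + m + 2) − 1 = n + m + 1` basis vectors. -/
theorem chain_form_convex_join {d n m : ℕ} (v : Fin (n + 1) → (Fin d → ℝ))
    (w : Fin (m + 1) → (Fin d → ℝ)) :
    {x : Fin d → ℝ | ∃ p ∈ chainForm v, ∃ q ∈ chainForm w,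
        ∃ l ∈ Set.Icc (0 : ℝ) 1, x = l • p + (1 - l) • q} =
    chainForm (fun j : Fin (n + m + 1 + 1) =>
      Fin.append v w (Fin.cast (by omega) j)) := by
  have hrange : Set.range (fun j : Fin (n + m + 1 + 1) =>
      Fin.append v w (Fin.cast (by omega) j)) = Set.range v ∪ Set.range w := by
    rw [← Fin.range_append]
    exact (finCongr (by omega)).surjective.range_comp _
  rw [← convexJoin_eq_setOf_smul_add_one_sub_smul, chainForm_eq_convexHull,
    chainForm_eq_convexHull, chainForm_eq_convexHull, hrange,
    convexHull_union (Set.range_nonempty v) (Set.range_nonempty w)]
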